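/- arXiv:2507.09957 — 2 statements merged into one kernel-verified Lean document; each statement's English description precedes it below -/
import Mathlib

section
/- Suppose there exist positive constants a, b, m, M, c₁, c₂, M₁, M₂, e with c₁ + c₂ < 1 such that for all (x,y,t): −⟨∇_x V(x,t), ∇F(x) − a·x⟩ ≤ M − b‖x‖^{2m}; |∂_t V(x,t)| ≤ c₁ b‖x‖^{2m} + M₁; ‖Σ‖₂²(x,y,t) ≤ 2c₂(a‖y‖² + b‖x‖^{2m}) + M₂; ‖E(x,y,t)‖ ≤ e; and e‖∇F(x) − a·x‖/‖x‖^{2m} → 0 as ‖x‖ → ∞. Then there exists a constant M* > 0 such that the expression ∂_t V(x,t) + ½‖Σ‖₂²(x,y,t) − ⟨E(x,y,t), y + ∇F(x) − a·x⟩ − a‖y‖² − ⟨∇_x V(x,t), ∇F(x) − a·x⟩ is bounded above by ½(c₁ + c₂ − 1)(a‖y‖² + b‖x‖^{2m}) + (M₁ + ½M₂ + M + M*) for all (x,y,t) ∈ ℝⁿ × ℝⁿ × ℝ⁺. -/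
open scoped RealInnerProductSpace

/-- upper bound (L3)-(L4) on the generator applied to the Lyapunov
function, under Hypotheses (H3)-(H5) and the vanishing condition (H4). -/
theorem stmt_3 {n : ℕ} (F : EuclideanSpace ℝ (Fin n) → ℝ)
    (V : EuclideanSpace ℝ (Fin n) → ℝ → ℝ)
    (Ef : EuclideanSpace ℝ (Fin n) → EuclideanSpace ℝ (Fin n) → ℝ → EuclideanSpace ℝ (Fin n))
    (S : EuclideanSpace ℝ (Fin n) → EuclideanSpace ℝ (Fin n) → ℝ → ℝ)
    (a b m M c₁ c₂ M₁ M₂ e : ℝ)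
    (ha : 0 < a) (hb : 0 < b) (hm : 0 < m) (hM : 0 < M)
    (hc₁ : 0 < c₁) (hc₂ : 0 < c₂) (hM₁ : 0 < M₁) (hM₂ : 0 < M₂) (he : 0 < e)
    (hsum : c₁ + c₂ < 1)
    (hF : ContDiff ℝ 2 F)
    (hH3 : ∀ (x : EuclideanSpace ℝ (Fin n)) (t : ℝ), 0 ≤ t →
      -⟪gradient (fun x' => V x' t) x, gradient F x - a • x⟫
        ≤ M - b * Real.rpow ‖x‖ (2*m))
    (hVt : ∀ (x : EuclideanSpace ℝ (Fin n)) (t : ℝ), 0 ≤ t →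
      |deriv (fun s => V x s) t| ≤ c₁ * b * Real.rpow ‖x‖ (2*m) + M₁)
    (hS : ∀ (x y : EuclideanSpace ℝ (Fin n)) (t : ℝ), 0 ≤ t →
      S x y t ≤ 2 * c₂ * (a * ‖y‖^2 + b * Real.rpow ‖x‖ (2*m)) + M₂)
    (hE : ∀ (x y : EuclideanSpace ℝ (Fin n)) (t : ℝ), 0 ≤ t → ‖Ef x y t‖ ≤ e)
    (hlim : Filter.Tendsto
      (fun x : EuclideanSpace ℝ (Fin n) =>
        e * ‖gradient F x - a • x‖ / Real.rpow ‖x‖ (2*m))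
      (Filter.cocompact (EuclideanSpace ℝ (Fin n))) (nhds 0)) :
    ∃ Mstar > 0, ∀ (x y : EuclideanSpace ℝ (Fin n)) (t : ℝ), 0 ≤ t →
      deriv (fun s => V x s) t + S x y t / 2
          - ⟪Ef x y t, y + gradient F x - a • x⟫
          - a * ‖y‖^2
          - ⟪gradient (fun x' => V x' t) x, gradient F x - a • x⟫
        ≤ (1/2) * (c₁ + c₂ - 1) * (a * ‖y‖^2 + b * Real.rpow ‖x‖ (2*m))
            + (M₁ + M₂/2 + M + Mstar) := by
  classical
  set g : EuclideanSpace ℝ (Fin n) → EuclideanSpace ℝ (Fin n) :=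
    fun x => gradient F x - a • x with hgdef
  have hgcont : Continuous g := by
    have h1 : Continuous fun x : EuclideanSpace ℝ (Fin n) => gradient F x := by
      simp only [gradient]
      exact (InnerProductSpace.toDual ℝ _).symm.continuous.comp
        (hF.continuous_fderiv (by norm_num))
    exact h1.sub (continuous_id.const_smul a)
  set δ : ℝ := 1 - c₁ - c₂ with hδdef
  have hδpos : 0 < δ := by simp only [hδdef]; linarith
  set α : ℝ := (1 + c₁ - c₂) / 2 with hαdef
  have hαpos : 0 < α := by simp only [hαdef]; linarith
  -- cocompact: eventually e‖g x‖ / r < δ*b/2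
  have hev : ∀ᶠ x in Filter.cocompact (EuclideanSpace ℝ (Fin n)),
      e * ‖g x‖ / Real.rpow ‖x‖ (2*m) < δ * b / 2 :=
    hlim.eventually_lt_const (by positivity)
  obtain ⟨K, hKc, hKsub⟩ := Filter.mem_cocompact.mp hev
  set K' : Set (EuclideanSpace ℝ (Fin n)) := K ∪ {0} with hK'def
  have hK'c : IsCompact K' := hKc.union isCompact_singleton
  obtain ⟨C, hC⟩ := hK'c.exists_bound_of_continuousOn
    ((continuous_const.mul hgcont.norm).continuousOn)
  set C₀ : ℝ := max C 0 with hC₀def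
  have hC₀ : 0 ≤ C₀ := le_max_right _ _
  refine ⟨e^2 / (4*α*a) + C₀ + 1, by positivity, ?_⟩
  intro x y t ht
  set R : ℝ := Real.rpow ‖x‖ (2*m) with hRdef
  have hR0 : 0 ≤ R := Real.rpow_nonneg (norm_nonneg x) _
  -- bound e‖g x‖
  have hG : e * ‖g x‖ ≤ δ * b / 2 * R + C₀ := by
    by_cases hx : x ∈ K'
    · have h1 : ‖e * ‖g x‖‖ ≤ C := hC x hx
      have h2 : e * ‖g x‖ ≤ C := le_trans (le_abs_self _) h1
      have : (0:ℝ) ≤ δ * b / 2 * R := by positivity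
      calc e * ‖g x‖ ≤ C := h2
        _ ≤ C₀ := le_max_left _ _
        _ ≤ δ * b / 2 * R + C₀ := by linarith
    · have hxK : x ∉ K := fun h => hx (Or.inl h)
      have hx0 : x ≠ 0 := fun h => hx (Or.inr h)
      have hRpos : 0 < R := Real.rpow_pos_of_pos (norm_pos_iff.mpr hx0) _
      have h1 : e * ‖g x‖ / R < δ * b / 2 := hKsub hxK
      have h2 : e * ‖g x‖ ≤ δ * b / 2 * R := by
        rw [div_lt_iff₀ hRpos] at h1; linarith
      linarith
  -- AM-GM : e‖y‖ ≤ α a ‖y‖² + e²/(4αa)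
  have h4 : (0:ℝ) < 4*α*a := by positivity
  have hAM : e * ‖y‖ ≤ α * a * ‖y‖^2 + e^2 / (4*α*a) := by
    rw [← sub_le_iff_le_add', le_div_iff₀ h4]
    nlinarith [sq_nonneg (2*α*a*‖y‖ - e)]
  -- inner product bound
  have hInner : -⟪Ef x y t, y + gradient F x - a • x⟫ ≤ e * ‖y‖ + e * ‖g x‖ := by
    have h1 : |⟪Ef x y t, y + gradient F x - a • x⟫| ≤
        ‖Ef x y t‖ * ‖y + gradient F x - a • x‖ := abs_real_inner_le_norm _ _
    have h2 : ‖y + gradient F x - a • x‖ ≤ ‖y‖ + ‖g x‖ := by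
      rw [hgdef]
      calc ‖y + gradient F x - a • x‖ = ‖y + (gradient F x - a • x)‖ := by
            rw [add_sub_assoc]
        _ ≤ ‖y‖ + ‖gradient F x - a • x‖ := norm_add_le _ _
    have h3 : ‖Ef x y t‖ * ‖y + gradient F x - a • x‖ ≤ e * (‖y‖ + ‖g x‖) :=
      mul_le_mul (hE x y t ht) h2 (norm_nonneg _) he.le
    have h4' := neg_abs_le ⟪Ef x y t, y + gradient F x - a • x⟫
    linarith [abs_nonneg ⟪Ef x y t, y + gradient F x - a • x⟫]
  have hA : deriv (fun s => V x s) t ≤ c₁ * b * R + M₁ := le_of_abs_le (hVt x t ht)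
  have hB : S x y t ≤ 2 * c₂ * (a * ‖y‖^2 + b * R) + M₂ := hS x y t ht
  have hD : -⟪gradient (fun x' => V x' t) x, gradient F x - a • x⟫ ≤ M - b * R :=
    hH3 x t ht
  have hδα : δ = 1 - c₁ - c₂ := hδdef
  have hαα : α = (1 + c₁ - c₂) / 2 := hαdef
  have key : c₁*b*R + c₂*(a*‖y‖^2 + b*R) + α*a*‖y‖^2 + δ*b/2*R - a*‖y‖^2 - b*R
      = (1/2)*(c₁+c₂-1)*(a*‖y‖^2 + b*R) := by
    rw [hδα, hαα]; ring
  linarith [hA, hB, hInner, hD, hAM, hG, key]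
end

section
/- Suppose constants α, β, b, M, ε, c, M₁ > 0 with c < 1 are such that: Cˢ(x,y,t) ⪰ 2αI (i.e., ⟨v, Cˢ(x,y,t)v⟩ ≥ 2α‖v‖² for all v), ‖C(x,y,t)‖ ≤ β, ‖E(x,y,t)‖ ≤ β, ⟨x, ∇V(x)⟩ ≥ b‖x‖^{2+ε} − M, and ‖Σ‖₂²(x,y,t) ≤ cα(‖y‖² + b‖x‖^{2+ε}) + M₁. Then there exists M* > 0 such that for all (x,y,t), −α(‖y‖² + ⟨x,∇V(x)⟩) − ⟨y,(Cˢ − 2αI)y⟩ − α⟨x,(C − 2αI)y⟩ − ⟨E, y + αx⟩ + ½‖Σ‖₂² ≤ −(α/2)(1−c)(‖y‖² + b‖x‖^{2+ε}) + M* + M₁/2. -/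
open scoped RealInnerProductSpace

private lemma rpow_eq_pow' (a b : ℝ) : Real.rpow a b = a ^ b := rfl

private lemma rsq_le_aux (ε η r : ℝ) (hε : 0 < ε) (hη : 0 < η) (hr : 0 ≤ r) :
    r ^ 2 ≤ η * Real.rpow r (2 + ε) + Real.rpow η (-(2 / ε)) := by
  simp only [rpow_eq_pow'] at *
  have hK : (0:ℝ) ≤ η ^ (-(2 / ε)) := Real.rpow_nonneg hη.le _
  rcases le_or_gt 1 (η * r ^ ε) with h | h
  · have hr0 : 0 < r := by
      rcases eq_or_lt_of_le hr with h0 | h0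
      · exfalso; rw [← h0, Real.zero_rpow (ne_of_gt hε)] at h; linarith
      · exact h0
    have hsplit : r ^ ((2:ℝ) + ε) = r ^ (2:ℕ) * r ^ ε := by
      rw [Real.rpow_add hr0]
      norm_num
    rw [hsplit]
    nlinarith [sq_nonneg r, Real.rpow_nonneg hr ε]
  · have hre : r ^ ε ≤ η⁻¹ := by
      calc r ^ ε = η⁻¹ * (η * r ^ ε) := by field_simp
        _ ≤ η⁻¹ * 1 := mul_le_mul_of_nonneg_left h.le (by positivity)
        _ = η⁻¹ := mul_one _
    have h1 : r ^ (2:ℕ) = (r ^ ε) ^ ((2:ℝ) / ε) := by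
      rw [← Real.rpow_natCast r 2, ← Real.rpow_mul hr]
      congr 1
      field_simp
      norm_num
    have h2 : (r ^ ε) ^ ((2:ℝ)/ε) ≤ (η⁻¹) ^ ((2:ℝ)/ε) :=
      Real.rpow_le_rpow (Real.rpow_nonneg hr ε) hre (by positivity)
    have h3 : (η⁻¹) ^ ((2:ℝ)/ε) = η ^ (-(2/ε)) := by
      rw [Real.rpow_neg hη.le, ← Real.inv_rpow hη.le]
    have h4 : 0 ≤ η * r ^ ((2:ℝ)+ε) := by positivity
    calc r ^ (2:ℕ) = (r ^ ε) ^ ((2:ℝ)/ε) := h1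
      _ ≤ η ^ (-(2/ε)) := by rw [← h3]; exact h2
      _ ≤ η * r ^ ((2:ℝ)+ε) + η ^ (-(2/ε)) := by linarith

private lemma young' (a d r s : ℝ) (ha : 0 < a) :
    d * (r * s) ≤ (a/4) * s^2 + (d^2/a) * r^2 := by
  rw [← sub_nonneg]
  have h : (a/4) * s^2 + (d^2/a) * r^2 - d * (r * s) = (a*s - 2*d*r)^2 / (4*a) := by
    field_simp
    ring
  rw [h]
  positivity

private lemma key_scalar (α β b ε M : ℝ) (hα : 0 < α) (hβ : 0 < β) (hb : 0 < b)
    (hε : 0 < ε) (hM : 0 < M) :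
    ∃ K > (0:ℝ), ∀ r s : ℝ, 0 ≤ r → 0 ≤ s →
      α*(β+2*α)*(r*s) + β*s + α*β*r + α*M
        ≤ (α/2)*s^2 + (α*b/2)*Real.rpow r (2+ε) + K := by
  set D : ℝ := α*(β+2*α) with hD
  have hDpos : 0 < D := by positivity
  set P : ℝ := D^2/α + α*β with hPdef
  have hP : 0 < P := by positivity
  set η : ℝ := α*b/(2*P) with hηdef
  have hη : 0 < η := by positivity
  refine ⟨α*M + β^2/α + α*β + P * Real.rpow η (-(2/ε)), ?_, ?_⟩
  · have h0 : 0 ≤ P * Real.rpow η (-(2/ε)) := mul_nonneg hP.le (Real.rpow_nonneg hη.le _)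
    have h1 : 0 < β^2/α := by positivity
    nlinarith [mul_pos hα hM, mul_pos hα hβ]
  intro r s hr hs
  set X : ℝ := Real.rpow r (2+ε) with hX
  have hXnn : 0 ≤ X := Real.rpow_nonneg hr _
  have hy1 : D*(r*s) ≤ (α/4)*s^2 + (D^2/α)*r^2 := young' α D r s hα
  have hy2 : β*s ≤ (α/4)*s^2 + β^2/α := by
    have := young' α β 1 s hα
    simpa using this
  have hy3 : α*β*r ≤ α*β*r^2 + α*β := by nlinarith [sq_nonneg (r-1), mul_pos hα hβ]
  have haux : r^2 ≤ η * X + Real.rpow η (-(2/ε)) := rsq_le_aux ε η r hε hη hr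
  have hPη : P * η = α*b/2 := by
    rw [hηdef]
    field_simp
  have hPr : P * r^2 ≤ (α*b/2)*X + P * Real.rpow η (-(2/ε)) := by
    have h := mul_le_mul_of_nonneg_left haux hP.le
    nlinarith [h, hPη]
  have hPsplit : P * r^2 = (D^2/α)*r^2 + (α*β)*r^2 := by rw [hPdef]; ring
  linarith

set_option maxHeartbeats 1000000 in
/-- the generator bound for system (LEq) under (A1)-(A4), with
Lyapunov function `Ψ(x,y) = ½‖y+αx‖² + V(x) + (α²/2)‖x‖²`. -/
theorem stmt_10 {n : ℕ}
    (C : EuclideanSpace ℝ (Fin n) → EuclideanSpace ℝ (Fin n) → ℝ →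
      (EuclideanSpace ℝ (Fin n) →L[ℝ] EuclideanSpace ℝ (Fin n)))
    (Cs : EuclideanSpace ℝ (Fin n) → EuclideanSpace ℝ (Fin n) → ℝ →
      (EuclideanSpace ℝ (Fin n) →L[ℝ] EuclideanSpace ℝ (Fin n)))
    (hCs : ∀ x y t, Cs x y t
      = (1/2 : ℝ) • (C x y t + ContinuousLinearMap.adjoint (C x y t)))
    (Ef : EuclideanSpace ℝ (Fin n) → EuclideanSpace ℝ (Fin n) → ℝ → EuclideanSpace ℝ (Fin n))
    (S : EuclideanSpace ℝ (Fin n) → EuclideanSpace ℝ (Fin n) → ℝ → ℝ)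
    (V : EuclideanSpace ℝ (Fin n) → ℝ) (hV : ContDiff ℝ 1 V)
    (α β b M ε c M₁ : ℝ)
    (hα : 0 < α) (hβ : 0 < β) (hb : 0 < b) (hM : 0 < M) (hε : 0 < ε)
    (hc0 : 0 < c) (hc : c < 1) (hM₁ : 0 < M₁)
    (hA2 : ∀ (x y : EuclideanSpace ℝ (Fin n)) (t : ℝ), 0 ≤ t →
      (∀ v : EuclideanSpace ℝ (Fin n), ⟪v, (Cs x y t) v⟫ ≥ 2 * α * ‖v‖^2) ∧
      ‖C x y t‖ ≤ β ∧ ‖Ef x y t‖ ≤ β)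
    (hA3 : ∀ x : EuclideanSpace ℝ (Fin n),
      ⟪x, gradient V x⟫ ≥ b * Real.rpow ‖x‖ (2 + ε) - M)
    (hA4 : ∀ (x y : EuclideanSpace ℝ (Fin n)) (t : ℝ), 0 ≤ t →
      S x y t ≤ c * α * (‖y‖^2 + b * Real.rpow ‖x‖ (2 + ε)) + M₁) :
    ∃ Mstar > (0:ℝ), ∀ (x y : EuclideanSpace ℝ (Fin n)) (t : ℝ), 0 ≤ t →
      -α * (‖y‖^2 + ⟪x, gradient V x⟫)
        - ⟪y, (Cs x y t) y - (2*α) • y⟫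
        - α * ⟪x, (C x y t) y - (2*α) • y⟫
        - ⟪Ef x y t, y + α • x⟫
        + S x y t / 2
      ≤ -(α/2) * (1 - c) * (‖y‖^2 + b * Real.rpow ‖x‖ (2 + ε)) + Mstar + M₁/2 := by
  obtain ⟨K, hK, hkey⟩ := key_scalar α β b ε M hα hβ hb hε hM
  refine ⟨K, hK, ?_⟩
  intro x y t ht
  obtain ⟨hCsv, hCnorm, hEnorm⟩ := hA2 x y t ht
  set X := Real.rpow ‖x‖ (2+ε) with hX
  have hXnn : 0 ≤ X := Real.rpow_nonneg (norm_nonneg _) _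
  have h1 : ⟪x, gradient V x⟫ ≥ b * X - M := hA3 x
  have h2 : ⟪y, (Cs x y t) y⟫ ≥ 2*α*‖y‖^2 := hCsv y
  have hinnerCs : ⟪y, (Cs x y t) y - (2*α) • y⟫ = ⟪y, (Cs x y t) y⟫ - 2*α*‖y‖^2 := by
    rw [inner_sub_right, real_inner_smul_right, real_inner_self_eq_norm_sq]
  have hinnerC : ⟪x, (C x y t) y - (2*α) • y⟫ = ⟪x, (C x y t) y⟫ - 2*α*⟪x,y⟫ := by
    rw [inner_sub_right, real_inner_smul_right]
  have h3 : |⟪x, (C x y t) y⟫| ≤ β * (‖x‖ * ‖y‖) := by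
    calc |⟪x, (C x y t) y⟫| ≤ ‖x‖ * ‖(C x y t) y‖ := abs_real_inner_le_norm _ _
      _ ≤ ‖x‖ * (‖C x y t‖ * ‖y‖) :=
          mul_le_mul_of_nonneg_left ((C x y t).le_opNorm y) (norm_nonneg x)
      _ ≤ β * (‖x‖ * ‖y‖) := by
          have h := mul_nonneg (sub_nonneg.2 hCnorm) (mul_nonneg (norm_nonneg x) (norm_nonneg y))
          nlinarith [h]
  have h4 : |⟪x, y⟫| ≤ ‖x‖ * ‖y‖ := abs_real_inner_le_norm x y
  have h5 : |⟪Ef x y t, y + α • x⟫| ≤ β * (‖y‖ + α*‖x‖) := by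
    calc |⟪Ef x y t, y + α • x⟫| ≤ ‖Ef x y t‖ * ‖y + α • x‖ := abs_real_inner_le_norm _ _
      _ ≤ ‖Ef x y t‖ * (‖y‖ + α*‖x‖) := by
          have hn : ‖y + α • x‖ ≤ ‖y‖ + α*‖x‖ := by
            calc ‖y + α • x‖ ≤ ‖y‖ + ‖α • x‖ := norm_add_le _ _
              _ = ‖y‖ + |α| * ‖x‖ := by rw [norm_smul]; rfl
              _ = ‖y‖ + α*‖x‖ := by rw [abs_of_pos hα]
          exact mul_le_mul_of_nonneg_left hn (norm_nonneg _)
      _ ≤ β * (‖y‖ + α*‖x‖) :=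
          mul_le_mul_of_nonneg_right hEnorm (by positivity)
  have h6 := hA4 x y t ht
  have hkey' := hkey ‖x‖ ‖y‖ (norm_nonneg x) (norm_nonneg y)
  rw [hinnerCs, hinnerC]
  have h3l := (abs_le.1 h3).1
  have h4u := (abs_le.1 h4).2
  have h5l := (abs_le.1 h5).1
  have hb1 : -(α*⟪x, gradient V x⟫) ≤ -(α*(b*X)) + α*M := by
    have h := mul_nonneg hα.le (by linarith : (0:ℝ) ≤ ⟪x, gradient V x⟫ - (b*X - M))
    nlinarith [h]
  have hb3 : -(α*⟪x, (C x y t) y⟫) ≤ α*(β*(‖x‖*‖y‖)) := by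
    have h := mul_nonneg hα.le (by linarith : (0:ℝ) ≤ β*(‖x‖*‖y‖) + ⟪x, (C x y t) y⟫)
    nlinarith [h]
  have hb4 : 2*α^2*⟪x,y⟫ ≤ 2*α^2*(‖x‖*‖y‖) := by
    have h := mul_nonneg (sq_nonneg α) (sub_nonneg.2 h4u)
    nlinarith [h]
  linarith [hb1, hb3, hb4, h2, h5l, h6, hkey']
end
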